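/- Let Φ be an n×d matrix, y = Φx* with s* = supp(x*). Let s be an index set of size k with e = |s* \ s| ≥ 1 and δ_k < 1. Then ‖Φ_{s* \ p}ᵀ y^{⊥s}‖₂ ≥ (1 − δ_e − δ_{k+e}²/(1 − δ_k)) ‖x*_{s* \ p}‖₂ − (δ_e + δ_{k+e}²/(1 − δ_k)) ‖x*_{s* ∩ l}‖₂, where l is any index set disjoint from s and p = s ∪ l (assuming s* \ p is nonempty). -/

import Mathlib

open Matrix Finset

noncomputable section

/-- Number of nonzero entries of a vector. -/
def sparsity {d : ℕ} (x : Fin d → ℝ) : ℕ :=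
  (Finset.univ.filter fun i => x i ≠ 0).card

/-- Squared Euclidean norm. -/
def nsq {k : Type*} [Fintype k] (v : k → ℝ) : ℝ := ∑ i, v i ^ 2

/-- Euclidean (ℓ₂) norm. -/
def l2 {k : Type*} [Fintype k] (v : k → ℝ) : ℝ := Real.sqrt (nsq v)

/-- `Φ` satisfies the order-`t` restricted isometry property with constant `δ`. -/
def satRIP {n d : ℕ} (Φ : Matrix (Fin n) (Fin d) ℝ) (t : ℕ) (δ : ℝ) : Prop :=
  ∀ x : Fin d → ℝ, sparsity x ≤ t →
    (1 - δ) * nsq x ≤ nsq (Φ.mulVec x) ∧ nsq (Φ.mulVec x) ≤ (1 + δ) * nsq x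

/-- The order-`t` RIP constant of `Φ` : the smallest `δ ≥ 0` satisfying the RIP bounds. -/
def ripConst {n d : ℕ} (Φ : Matrix (Fin n) (Fin d) ℝ) (t : ℕ) : ℝ :=
  sInf {δ : ℝ | 0 ≤ δ ∧ satRIP Φ t δ}

/-- The submatrix of `Φ` consisting of the columns indexed by `s`. -/
def cols {n d : ℕ} (Φ : Matrix (Fin n) (Fin d) ℝ) (s : Finset (Fin d)) :
    Matrix (Fin n) {i // i ∈ s} ℝ := Φ.submatrix id (fun i => (i : Fin d))

/-- Orthogonal projection `P{Φ_s} = Φ_s (Φ_sᵀ Φ_s)⁻¹ Φ_sᵀ` onto the column span of `Φ_s`. -/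
def proj {n d : ℕ} (Φ : Matrix (Fin n) (Fin d) ℝ) (s : Finset (Fin d)) :
    Matrix (Fin n) (Fin n) ℝ :=
  cols Φ s * ((cols Φ s)ᵀ * cols Φ s)⁻¹ * (cols Φ s)ᵀ

/-- Least-squares residual `v^{⊥s} = (I - P{Φ_s}) v`. -/
def residVec {n d : ℕ} (Φ : Matrix (Fin n) (Fin d) ℝ) (s : Finset (Fin d)) (y : Fin n → ℝ) :
    Fin n → ℝ := y - (proj Φ s).mulVec y

/-- The `i`-th column of `Φ`. -/
def col {n d : ℕ} (Φ : Matrix (Fin n) (Fin d) ℝ) (i : Fin d) : Fin n → ℝ := fun k => Φ k i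

/-- `x` is a least-squares estimate of `y` supported on `s`:
it is supported on `s` and minimizes `‖y - Φ z‖₂` over all `z` supported on `s`. -/
def leastSq {n d : ℕ} (Φ : Matrix (Fin n) (Fin d) ℝ) (y : Fin n → ℝ) (s : Finset (Fin d))
    (x : Fin d → ℝ) : Prop :=
  (∀ i, i ∉ s → x i = 0) ∧
  ∀ z : Fin d → ℝ, (∀ i, i ∉ s → z i = 0) → nsq (y - Φ.mulVec x) ≤ nsq (y - Φ.mulVec z)

/-- The support of a vector, as a `Finset`. -/
def spt {d : ℕ} (x : Fin d → ℝ) : Finset (Fin d) :=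
  Finset.univ.filter fun i => x i ≠ 0

/-!
Write `x* = x*_s + a + b` with `a = x*_{s* \ p}` and `b = x*_{s* ∩ l}`. The projection fixes
`Φ x*_s`, so `y^{⊥s} = Φ u - P Φ u` with `u = a + b`, and on `s* \ p`
  `Φᵀ y^{⊥s} = a + (ΦᵀΦ - I) u - Φᵀ P Φ a - Φᵀ P Φ b`.
Polarizing the RIP on supports of size `e` bounds `(ΦᵀΦ - I) u` by `δ_e ‖u‖`. Writing `P Φ v` as
`Φ_s G⁻¹ Φ_sᵀ Φ v` with the Gram matrix `G = Φ_sᵀ Φ_s`, whose inverse has norm at most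
`1 / (1 - δ_k)`, bounds each projection term by `δ_{k+e}² / (1 - δ_k)` times the norm of its
argument. The reverse triangle inequality concludes.
-/

section Euclidean

variable {ι : Type*} [Fintype ι]

lemma nsq_nonneg (v : ι → ℝ) : 0 ≤ nsq v := sum_nonneg fun _ _ => sq_nonneg _

lemma l2_eq_norm (v : ι → ℝ) : l2 v = ‖WithLp.toLp 2 v‖ := by
  simp [l2, nsq, EuclideanSpace.norm_eq]

lemma l2_eq_zero_iff {v : ι → ℝ} : l2 v = 0 ↔ v = 0 := by
  rw [l2_eq_norm, norm_eq_zero, WithLp.toLp_eq_zero]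

lemma l2_sq (v : ι → ℝ) : l2 v ^ 2 = nsq v := Real.sq_sqrt (nsq_nonneg v)

lemma l2_nonneg (v : ι → ℝ) : 0 ≤ l2 v := Real.sqrt_nonneg _

lemma l2_add_le (u v : ι → ℝ) : l2 (u + v) ≤ l2 u + l2 v := by
  simpa only [l2_eq_norm, WithLp.toLp_add] using norm_add_le _ _

lemma l2_sub_le (u v : ι → ℝ) : l2 (u - v) ≤ l2 u + l2 v := by
  simpa only [l2_eq_norm, WithLp.toLp_sub] using norm_sub_le _ _

lemma dotProduct_le_l2_mul_l2 (u v : ι → ℝ) : u ⬝ᵥ v ≤ l2 u * l2 v := by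
  have := real_inner_le_norm (WithLp.toLp 2 u) (WithLp.toLp 2 v)
  simpa [l2_eq_norm, EuclideanSpace.inner_eq_star_dotProduct, dotProduct_comm] using this

lemma nsq_eq_dotProduct (v : ι → ℝ) : nsq v = v ⬝ᵥ v := by
  simp [nsq, dotProduct, sq]

lemma nsq_smul (c : ℝ) (v : ι → ℝ) : nsq (c • v) = c ^ 2 * nsq v := by
  simp [nsq, mul_pow, mul_sum]

lemma nsq_add (u v : ι → ℝ) : nsq (u + v) = nsq u + 2 * (u ⬝ᵥ v) + nsq v := by
  simp only [nsq, dotProduct, Pi.add_apply, mul_sum, ← sum_add_distrib]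
  exact sum_congr rfl fun _ _ => by ring

lemma nsq_sub (u v : ι → ℝ) : nsq (u - v) = nsq u - 2 * (u ⬝ᵥ v) + nsq v := by
  simp only [nsq, dotProduct, Pi.sub_apply, mul_sum, ← sum_add_distrib, ← sum_sub_distrib]
  exact sum_congr rfl fun _ _ => by ring

lemma nsq_indicator (s : Set ι) (w : ι → ℝ) : nsq (s.indicator w) = s.indicator w ⬝ᵥ w := by
  classical
  refine sum_congr rfl fun i _ => ?_
  by_cases hi : i ∈ s <;> simp [hi, sq]

lemma sqrt_sum_sq_eq_l2_indicator (t : Finset ι) (g : ι → ℝ) :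
    Real.sqrt (∑ i ∈ t, g i ^ 2) = l2 ((t : Set ι).indicator g) := by
  classical
  simp [l2, nsq, Set.indicator_apply, apply_ite (· ^ 2), sum_ite_mem]

end Euclidean

lemma mulVec_dotProduct {m ι : Type*} [Fintype m] [Fintype ι] (A : Matrix m ι ℝ) (z : ι → ℝ)
    (w : m → ℝ) : A *ᵥ z ⬝ᵥ w = z ⬝ᵥ Aᵀ *ᵥ w := by
  rw [dotProduct_mulVec, vecMul_transpose]

lemma col_dotProduct {n d : ℕ} (Φ : Matrix (Fin n) (Fin d) ℝ) (i : Fin d) (y : Fin n → ℝ) :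
    _root_.col Φ i ⬝ᵥ y = (Φᵀ *ᵥ y) i :=
  rfl

lemma sparsity_le_card {d : ℕ} {x : Fin d → ℝ} {T : Finset (Fin d)}
    (hx : Function.support x ⊆ T) : sparsity x ≤ T.card :=
  card_le_card fun _ hi => hx (mem_filter.mp hi).2

section RIP

variable {n d : ℕ} (Φ : Matrix (Fin n) (Fin d) ℝ)

lemma exists_satRIP (t : ℕ) : ∃ δ, 0 ≤ δ ∧ satRIP Φ t δ := by
  let A := LinearMap.toContinuousLinearMap (Matrix.toEuclideanLin Φ)
  refine ⟨‖A‖ ^ 2 + 1, by positivity, fun x _ => ⟨?_, ?_⟩⟩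
  · nlinarith [nsq_nonneg x, nsq_nonneg (Φ *ᵥ x), norm_nonneg A]
  · have h : l2 (Φ *ᵥ x) ≤ ‖A‖ * l2 x := by
      simpa [l2_eq_norm, A] using A.le_opNorm (WithLp.toLp 2 x)
    have h2 : nsq (Φ *ᵥ x) ≤ ‖A‖ ^ 2 * nsq x := by
      rw [← l2_sq, ← l2_sq, ← mul_pow]
      exact pow_le_pow_left₀ (Real.sqrt_nonneg _) h 2
    nlinarith [nsq_nonneg x]

lemma isClosed_setOf_satRIP (t : ℕ) : IsClosed {δ : ℝ | 0 ≤ δ ∧ satRIP Φ t δ} := by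
  simp only [satRIP, Set.ofPred_and, Set.ofPred_forall]
  refine (isClosed_le continuous_const continuous_id).inter
    (isClosed_iInter fun x => isClosed_iInter fun _ => ?_)
  exact (isClosed_le (by fun_prop) continuous_const).inter
    (isClosed_le continuous_const (by fun_prop))

lemma ripConst_nonneg_and_satRIP (t : ℕ) : 0 ≤ ripConst Φ t ∧ satRIP Φ t (ripConst Φ t) :=
  (isClosed_setOf_satRIP Φ t).csInf_mem (exists_satRIP Φ t) ⟨0, fun _ hδ => hδ.1⟩

end RIP

namespace satRIP

variable {n d t : ℕ} {Φ : Matrix (Fin n) (Fin d) ℝ} {δ : ℝ} {T : Finset (Fin d)}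

lemma abs_nsq_mulVec_sub_le (h : satRIP Φ t δ) (hT : T.card ≤ t) {x : Fin d → ℝ}
    (hx : Function.support x ⊆ T) : |nsq (Φ *ᵥ x) - nsq x| ≤ δ * nsq x := by
  obtain ⟨hlow, hup⟩ := h x ((sparsity_le_card hx).trans hT)
  rw [abs_le]
  constructor <;> linarith

lemma abs_dotProduct_sub_le_half (h : satRIP Φ t δ) (hT : T.card ≤ t) {u v : Fin d → ℝ}
    (hu : Function.support u ⊆ T) (hv : Function.support v ⊆ T) :
    |Φ *ᵥ u ⬝ᵥ Φ *ᵥ v - u ⬝ᵥ v| ≤ δ / 2 * (nsq u + nsq v) := by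
  have hadd := h.abs_nsq_mulVec_sub_le (x := u + v) hT
    ((Function.support_add u v).trans (Set.union_subset hu hv))
  have hsub := h.abs_nsq_mulVec_sub_le (x := u - v) hT
    ((Function.support_sub u v).trans (Set.union_subset hu hv))
  rw [mulVec_add, nsq_add, nsq_add] at hadd
  rw [mulVec_sub, nsq_sub, nsq_sub] at hsub
  rw [abs_le] at hadd hsub ⊢
  constructor <;> nlinarith [hadd.1, hadd.2, hsub.1, hsub.2]

lemma abs_dotProduct_sub_le (h : satRIP Φ t δ) (hT : T.card ≤ t) {u v : Fin d → ℝ}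
    (hu : Function.support u ⊆ T) (hv : Function.support v ⊆ T) :
    |Φ *ᵥ u ⬝ᵥ Φ *ᵥ v - u ⬝ᵥ v| ≤ δ * l2 u * l2 v := by
  rcases (l2_nonneg u).eq_or_lt with hu0 | hu0
  · obtain rfl := l2_eq_zero_iff.mp hu0.symm
    simp [← hu0]
  rcases (l2_nonneg v).eq_or_lt with hv0 | hv0
  · obtain rfl := l2_eq_zero_iff.mp hv0.symm
    simp [← hv0]
  -- polarize the unit vectors `u / ‖u‖` and `v / ‖v‖`
  have key := h.abs_dotProduct_sub_le_half hT
    ((Function.support_const_smul_subset (l2 u)⁻¹ u).trans hu)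
    ((Function.support_const_smul_subset (l2 v)⁻¹ v).trans hv)
  rw [nsq_smul, nsq_smul, ← l2_sq u, ← l2_sq v, inv_pow, inv_pow,
    inv_mul_cancel₀ (pow_pos hu0 2).ne', inv_mul_cancel₀ (pow_pos hv0 2).ne'] at key
  simp only [mulVec_smul, smul_dotProduct, dotProduct_smul, smul_eq_mul, ← mul_sub, abs_mul,
    abs_of_pos (inv_pos.2 hu0), abs_of_pos (inv_pos.2 hv0)] at key
  rw [mul_assoc, ← div_le_iff₀ (mul_pos hu0 hv0)]
  field_simp at key ⊢
  linarith

lemma l2_indicator_gram_sub_le (h : satRIP Φ t δ) (hδ : 0 ≤ δ) {q : Finset (Fin d)}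
    (hcard : (q ∪ T).card ≤ t) {v : Fin d → ℝ} (hv : Function.support v ⊆ T) :
    l2 ((q : Set (Fin d)).indicator (Φᵀ *ᵥ (Φ *ᵥ v) - v)) ≤ δ * l2 v := by
  set z := (q : Set (Fin d)).indicator (Φᵀ *ᵥ (Φ *ᵥ v) - v)
  have hz : Function.support z ⊆ ↑(q ∪ T) :=
    Set.support_indicator_subset.trans (by simp)
  have hnsq : l2 z ^ 2 = Φ *ᵥ z ⬝ᵥ Φ *ᵥ v - z ⬝ᵥ v := by
    rw [mulVec_dotProduct, ← dotProduct_sub, l2_sq, nsq_indicator]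
  have hcs := h.abs_dotProduct_sub_le hcard hz (hv.trans (by simp))
  rcases (l2_nonneg z).eq_or_lt with hz0 | hz0
  · rw [← hz0]
    exact mul_nonneg hδ (l2_nonneg v)
  nlinarith [le_abs_self (Φ *ᵥ z ⬝ᵥ Φ *ᵥ v - z ⬝ᵥ v)]

lemma l2_indicator_gram_le (h : satRIP Φ t δ) (hδ : 0 ≤ δ) {q : Finset (Fin d)}
    (hcard : (q ∪ T).card ≤ t) (hqT : Disjoint q T) {v : Fin d → ℝ}
    (hv : Function.support v ⊆ T) :
    l2 ((q : Set (Fin d)).indicator (Φᵀ *ᵥ (Φ *ᵥ v))) ≤ δ * l2 v := by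
  have hvq : (q : Set (Fin d)).indicator v = 0 :=
    Set.indicator_eq_zero'.mpr ((Finset.disjoint_coe.mpr hqT).symm.mono_left hv)
  simpa only [Set.indicator_sub', hvq, sub_zero] using h.l2_indicator_gram_sub_le hδ hcard hv

end satRIP

section Gram

variable {m ι : Type*} [Fintype m] [Fintype ι]

lemma dotProduct_gram_mulVec (A : Matrix m ι ℝ) (w : ι → ℝ) :
    w ⬝ᵥ (Aᵀ * A) *ᵥ w = nsq (A *ᵥ w) := by
  rw [← mulVec_mulVec, ← mulVec_dotProduct, nsq_eq_dotProduct]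

variable [DecidableEq ι] {A : Matrix m ι ℝ} {c : ℝ}

lemma isUnit_gram (hc : 0 < c) (hA : ∀ w, c * nsq w ≤ nsq (A *ᵥ w)) : IsUnit (Aᵀ * A) := by
  have hH : (Aᵀ * A).IsHermitian := isHermitian_conjTranspose_mul_self A
  refine (PosDef.of_dotProduct_mulVec_pos hH fun w hw => ?_).isUnit
  rw [star_trivial, dotProduct_gram_mulVec]
  have : 0 < nsq w := by
    rw [← l2_sq]
    exact pow_pos ((l2_nonneg w).lt_of_ne (Ne.symm (mt l2_eq_zero_iff.mp hw))) 2
  nlinarith [hA w]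

lemma mul_gram_inv_mul_transpose_mulVec_mulVec (hc : 0 < c)
    (hA : ∀ w, c * nsq w ≤ nsq (A *ᵥ w)) (w : ι → ℝ) :
    (A * (Aᵀ * A)⁻¹ * Aᵀ) *ᵥ (A *ᵥ w) = A *ᵥ w := by
  rw [mulVec_mulVec, Matrix.mul_assoc, Matrix.mul_assoc A,
    nonsing_inv_mul _ ((isUnit_iff_isUnit_det _).mp (isUnit_gram hc hA)), Matrix.mul_one]

lemma mul_l2_gram_inv_mulVec_le (hc : 0 < c) (hA : ∀ w, c * nsq w ≤ nsq (A *ᵥ w))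
    (z : ι → ℝ) : c * l2 ((Aᵀ * A)⁻¹ *ᵥ z) ≤ l2 z := by
  set w := (Aᵀ * A)⁻¹ *ᵥ z
  have hGw : (Aᵀ * A) *ᵥ w = z := by
    rw [mulVec_mulVec, mul_nonsing_inv _ ((isUnit_iff_isUnit_det _).mp (isUnit_gram hc hA)),
      one_mulVec]
  -- `c ‖w‖² ≤ ‖A w‖² = ⟪w, Aᵀ A w⟫ = ⟪w, z⟫ ≤ ‖w‖ ‖z‖`
  have h := (hA w).trans_eq ((dotProduct_gram_mulVec A w).symm.trans (congrArg _ hGw))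
  rw [← l2_sq] at h
  rcases (l2_nonneg w).eq_or_lt with hw0 | hw0
  · rw [← hw0, mul_zero]
    exact l2_nonneg z
  nlinarith [dotProduct_le_l2_mul_l2 w z]

end Gram

def zeroExtend {α : Type*} [DecidableEq α] (s : Finset α) (w : s → ℝ) : α → ℝ :=
  fun i => if h : i ∈ s then w ⟨i, h⟩ else 0

section ZeroExtend

variable {α : Type*} [DecidableEq α] (s : Finset α)

lemma support_zeroExtend_subset (w : s → ℝ) : Function.support (zeroExtend s w) ⊆ s :=
  fun _ hi => by_contra fun h => hi (dif_neg h)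

lemma zeroExtend_restrict {v : α → ℝ} (hv : Function.support v ⊆ s) :
    zeroExtend s (fun j => v j) = v := by
  funext i
  by_cases hi : i ∈ s
  · simp [zeroExtend, hi]
  · simp [zeroExtend, hi, Function.notMem_support.mp fun h => hi (hv h)]

variable [Fintype α]

lemma sum_zeroExtend_mul (f : α → ℝ) (w : s → ℝ) :
    ∑ i, f i * zeroExtend s w i = ∑ j : s, f j * w j := by
  rw [← sum_subset (subset_univ s) fun i _ hi => by simp [zeroExtend, hi], ← sum_coe_sort s]
  exact sum_congr rfl fun j _ => by simp [zeroExtend]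

lemma nsq_zeroExtend (w : s → ℝ) : nsq (zeroExtend s w) = nsq w := by
  rw [nsq, ← sum_subset (subset_univ s) fun i _ hi => by simp [zeroExtend, hi], ← sum_coe_sort s]
  exact sum_congr rfl fun j _ => by simp [zeroExtend]

lemma l2_zeroExtend (w : s → ℝ) : l2 (zeroExtend s w) = l2 w := by
  rw [l2, l2, nsq_zeroExtend]

end ZeroExtend

section Cols

variable {n d : ℕ} (Φ : Matrix (Fin n) (Fin d) ℝ) (s : Finset (Fin d))

lemma cols_mulVec (w : s → ℝ) : cols Φ s *ᵥ w = Φ *ᵥ zeroExtend s w := by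
  funext p
  exact (sum_zeroExtend_mul s (Φ p) w).symm

lemma l2_transpose_cols_mulVec (y : Fin n → ℝ) :
    l2 ((cols Φ s)ᵀ *ᵥ y) = l2 ((s : Set (Fin d)).indicator (Φᵀ *ᵥ y)) := by
  rw [← sqrt_sum_sq_eq_l2_indicator, ← sum_coe_sort]
  rfl

lemma proj_mulVec (y : Fin n → ℝ) :
    proj Φ s *ᵥ y = Φ *ᵥ zeroExtend s (((cols Φ s)ᵀ * cols Φ s)⁻¹ *ᵥ ((cols Φ s)ᵀ *ᵥ y)) := by
  rw [← cols_mulVec, proj, ← mulVec_mulVec, ← mulVec_mulVec]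

variable {Φ s} {k : ℕ} {δk : ℝ}

lemma satRIP.mul_nsq_le_nsq_cols_mulVec (h : satRIP Φ k δk) (hs : s.card ≤ k) (w : s → ℝ) :
    (1 - δk) * nsq w ≤ nsq (cols Φ s *ᵥ w) := by
  rw [cols_mulVec, ← nsq_zeroExtend s w]
  exact (h _ ((sparsity_le_card (support_zeroExtend_subset s w)).trans hs)).1

lemma proj_mulVec_mulVec_of_support_subset (h : satRIP Φ k δk) (hδk : δk < 1) (hs : s.card ≤ k)
    {v : Fin d → ℝ} (hv : Function.support v ⊆ s) : proj Φ s *ᵥ (Φ *ᵥ v) = Φ *ᵥ v := by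
  rw [← zeroExtend_restrict s hv, ← cols_mulVec]
  exact mul_gram_inv_mul_transpose_mulVec_mulVec (sub_pos.2 hδk)
    (h.mul_nsq_le_nsq_cols_mulVec hs) _

lemma satRIP.l2_indicator_transpose_proj_le {t : ℕ} {δ : ℝ} (hk : satRIP Φ k δk) (hδk : δk < 1)
    (hs : s.card ≤ k) (h : satRIP Φ t δ) (hδ : 0 ≤ δ) {q T : Finset (Fin d)}
    (hqs : Disjoint q s) (hTs : Disjoint T s) (hq : (q ∪ s).card ≤ t) (hT : (s ∪ T).card ≤ t)
    {v : Fin d → ℝ} (hv : Function.support v ⊆ T) :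
    l2 ((q : Set (Fin d)).indicator (Φᵀ *ᵥ (proj Φ s *ᵥ (Φ *ᵥ v)))) ≤
      δ ^ 2 / (1 - δk) * l2 v := by
  have hδk' : 0 < 1 - δk := sub_pos.2 hδk
  set z := (cols Φ s)ᵀ *ᵥ (Φ *ᵥ v)
  set w := ((cols Φ s)ᵀ * cols Φ s)⁻¹ *ᵥ z
  have hz : l2 z ≤ δ * l2 v := by
    rw [l2_transpose_cols_mulVec]
    exact h.l2_indicator_gram_le hδ hT hTs.symm hv
  have hw : (1 - δk) * l2 w ≤ l2 z :=
    mul_l2_gram_inv_mulVec_le hδk' (hk.mul_nsq_le_nsq_cols_mulVec hs) z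
  have hPv := h.l2_indicator_gram_le hδ hq hqs (support_zeroExtend_subset s w)
  rw [l2_zeroExtend] at hPv
  rw [proj_mulVec]
  calc _ ≤ δ * l2 w := hPv
    _ ≤ δ * (δ * l2 v / (1 - δk)) := by
      gcongr
      rw [le_div_iff₀ hδk']
      linarith
    _ = δ ^ 2 / (1 - δk) * l2 v := by ring

end Cols

section Residual

variable {n d : ℕ} {Φ : Matrix (Fin n) (Fin d) ℝ} {s l : Finset (Fin d)}

lemma eq_indicator_add_indicator_sdiff_add_indicator_inter (x : Fin d → ℝ) (hls : Disjoint l s) :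
    x = (s : Set (Fin d)).indicator x + ((↑(spt x \ (s ∪ l)) : Set (Fin d)).indicator x +
      (↑(spt x ∩ l) : Set (Fin d)).indicator x) := by
  funext i
  have : i ∈ l → i ∉ s := fun h => disjoint_left.mp hls h
  by_cases hs : i ∈ s <;> by_cases hl : i ∈ l <;> simp_all [spt, Set.indicator_apply]

lemma residVec_mulVec_eq_of_support_sub_subset {k : ℕ} {δk : ℝ} (hK : satRIP Φ k δk)
    (hδk : δk < 1) (hs : s.card ≤ k) {x u : Fin d → ℝ} (hxu : Function.support (x - u) ⊆ s) :
    residVec Φ s (Φ *ᵥ x) = Φ *ᵥ u - proj Φ s *ᵥ (Φ *ᵥ u) := by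
  have hPxu := proj_mulVec_mulVec_of_support_subset hK hδk hs hxu
  rw [mulVec_sub, mulVec_sub] at hPxu
  rw [residVec, sub_eq_iff_eq_add.1 hPxu]
  abel

lemma l2_indicator_transpose_residVec_ge {x : Fin d → ℝ} {k e : ℕ} {δe δk δke : ℝ}
    (hE : satRIP Φ e δe) (hK : satRIP Φ k δk) (hKE : satRIP Φ (k + e) δke) (hδe : 0 ≤ δe)
    (hδk : δk < 1) (hδke : 0 ≤ δke) (hs : s.card ≤ k) (he : (spt x \ s).card ≤ e) (hls : Disjoint l s) :
    (1 - δe - δke ^ 2 / (1 - δk)) * l2 ((↑(spt x \ (s ∪ l)) : Set (Fin d)).indicator x) -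
        (δe + δke ^ 2 / (1 - δk)) * l2 ((↑(spt x ∩ l) : Set (Fin d)).indicator x) ≤
      l2 ((↑(spt x \ (s ∪ l)) : Set (Fin d)).indicator (Φᵀ *ᵥ residVec Φ s (Φ *ᵥ x))) := by
  set R := spt x \ (s ∪ l)
  set L := spt x ∩ l
  set a := (R : Set (Fin d)).indicator x
  set b := (L : Set (Fin d)).indicator x
  have hRs : R ⊆ spt x \ s := sdiff_subset_sdiff subset_rfl subset_union_left
  have hLs : L ⊆ spt x \ s := fun i hi =>
    mem_sdiff.2 ⟨(mem_inter.1 hi).1, disjoint_left.1 hls (mem_inter.1 hi).2⟩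
  have ha : Function.support a ⊆ R := Set.support_indicator_subset
  have hb : Function.support b ⊆ L := Set.support_indicator_subset
  have hab : Function.support (a + b) ⊆ ↑(spt x \ s) :=
    (Function.support_add a b).trans (Set.union_subset (ha.trans hRs) (hb.trans hLs))
  have hcard {T : Finset (Fin d)} (hT : T ⊆ spt x \ s) : (T ∪ s).card ≤ k + e :=
    (card_union_le T s).trans (by have := card_le_card hT; omega)
  have hresid : residVec Φ s (Φ *ᵥ x) = Φ *ᵥ (a + b) - proj Φ s *ᵥ (Φ *ᵥ (a + b)) := by
    refine residVec_mulVec_eq_of_support_sub_subset hK hδk hs ?_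
    rw [sub_eq_iff_eq_add.2 (eq_indicator_add_indicator_sdiff_add_indicator_inter x hls)]
    exact Set.support_indicator_subset
  set Y := (R : Set (Fin d)).indicator (Φᵀ *ᵥ residVec Φ s (Φ *ᵥ x))
  set E₁ := (R : Set (Fin d)).indicator (Φᵀ *ᵥ (Φ *ᵥ (a + b)) - (a + b))
  set E₂ := (R : Set (Fin d)).indicator (Φᵀ *ᵥ (proj Φ s *ᵥ (Φ *ᵥ a)))
  set E₃ := (R : Set (Fin d)).indicator (Φᵀ *ᵥ (proj Φ s *ᵥ (Φ *ᵥ b)))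
  have hsplit : a = Y - E₁ + E₂ + E₃ := by
    have hRL : Disjoint L R := disjoint_left.2 fun i hiL hiR =>
      (mem_sdiff.1 hiR).2 (mem_union_right s (mem_inter.1 hiL).2)
    have hRa : (R : Set (Fin d)).indicator a = a := Set.indicator_eq_self.2 ha
    have hRb : (R : Set (Fin d)).indicator b = 0 :=
      Set.indicator_eq_zero'.2 (Set.disjoint_of_subset_left hb (disjoint_coe.2 hRL))
    simp only [Y, E₁, E₂, E₃, hresid, mulVec_sub, mulVec_add, Set.indicator_sub',
      Set.indicator_add', hRa, hRb]
    abel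
  have hRs' : Disjoint R s := disjoint_of_subset_left hRs sdiff_disjoint
  have hLs' : Disjoint L s := disjoint_of_subset_left hLs sdiff_disjoint
  have h₁ : l2 E₁ ≤ δe * (l2 a + l2 b) :=
    (hE.l2_indicator_gram_sub_le hδe (by rwa [union_eq_right.2 hRs]) hab).trans
      (mul_le_mul_of_nonneg_left (l2_add_le a b) hδe)
  have h₂ : l2 E₂ ≤ δke ^ 2 / (1 - δk) * l2 a :=
    hK.l2_indicator_transpose_proj_le hδk hs hKE hδke hRs' hRs' (hcard hRs)
      (union_comm s R ▸ hcard hRs) ha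
  have h₃ : l2 E₃ ≤ δke ^ 2 / (1 - δk) * l2 b :=
    hK.l2_indicator_transpose_proj_le hδk hs hKE hδke hRs' hLs' (hcard hRs)
      (union_comm s L ▸ hcard hLs) hb
  have htri : l2 a ≤ l2 Y + l2 E₁ + l2 E₂ + l2 E₃ := by
    rw [hsplit]
    exact (l2_add_le _ _).trans (add_le_add ((l2_add_le _ _).trans
      (add_le_add (l2_sub_le _ _) le_rfl)) le_rfl)
  linarith

end Residual

theorem stmt10_general {n d : ℕ} (Φ : Matrix (Fin n) (Fin d) ℝ)
    (xs : Fin d → ℝ) (k e : ℕ)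
    (s : Finset (Fin d)) (hs : s.card = k)
    (he : e = (spt xs \ s).card)
    (hδk : ripConst Φ k < 1)
    (l : Finset (Fin d)) (hdisj : Disjoint l s) :
    (1 - ripConst Φ e - ripConst Φ (k + e) ^ 2 / (1 - ripConst Φ k)) *
        Real.sqrt (∑ i ∈ spt xs \ (s ∪ l), xs i ^ 2) -
      (ripConst Φ e + ripConst Φ (k + e) ^ 2 / (1 - ripConst Φ k)) *
        Real.sqrt (∑ i ∈ spt xs ∩ l, xs i ^ 2) ≤
    Real.sqrt (∑ i ∈ spt xs \ (s ∪ l),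
      (_root_.col Φ i ⬝ᵥ residVec Φ s (Φ.mulVec xs)) ^ 2) := by
  obtain ⟨hδe, hE⟩ := ripConst_nonneg_and_satRIP Φ e
  obtain ⟨-, hK⟩ := ripConst_nonneg_and_satRIP Φ k
  obtain ⟨hδke, hKE⟩ := ripConst_nonneg_and_satRIP Φ (k + e)
  simp only [col_dotProduct, sqrt_sum_sq_eq_l2_indicator]
  exact l2_indicator_transpose_residVec_ge hE hK hKE hδe hδk hδke hs.le he.ge hdisj

/-- lower bound on the correlation of the missed true features with
the residual. -/
theorem stmt10 {n d : ℕ} (Φ : Matrix (Fin n) (Fin d) ℝ)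
    (xs : Fin d → ℝ) (k e : ℕ)
    (s : Finset (Fin d)) (hs : s.card = k)
    (he : e = (spt xs \ s).card) (he1 : 1 ≤ e)
    (hδk : ripConst Φ k < 1)
    (l : Finset (Fin d)) (hdisj : Disjoint l s)
    (hnonempty : (spt xs \ (s ∪ l)).Nonempty) :
    (1 - ripConst Φ e - ripConst Φ (k + e) ^ 2 / (1 - ripConst Φ k)) *
        Real.sqrt (∑ i ∈ spt xs \ (s ∪ l), xs i ^ 2) -
      (ripConst Φ e + ripConst Φ (k + e) ^ 2 / (1 - ripConst Φ k)) *
        Real.sqrt (∑ i ∈ spt xs ∩ l, xs i ^ 2) ≤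
    Real.sqrt (∑ i ∈ spt xs \ (s ∪ l),
      (_root_.col Φ i ⬝ᵥ residVec Φ s (Φ.mulVec xs)) ^ 2) :=
  stmt10_general Φ xs k e s hs he hδk l hdisj
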